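/- arXiv:math/0603502 — 5 statements merged into one kernel-verified Lean document; each statement's English description precedes it below -/
import Mathlib

section
/- Let H be a complex Hilbert space, J : H → H a unitary operator with J* = −J, and L ⊆ H a closed Lagrangian subspace (L^⊥ = J(L)). Then the restriction of the orthogonal projection Π_i := ½(I − iJ) to L is a continuous linear bijection from L onto the eigenspace H_i = ker(J − i·I), and likewise the restriction of Π_{−i} := ½(I + iJ) to L is a continuous linear bijection from L onto H_{−i} = ker(J + i·I). -/
/-!
`J² = -1`, so `Π_{-i}` fixes `H_{-i}`, maps into it, and satisfies `Π_{-i} J = -i Π_{-i}`.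
A vector of `L` killed by `Π_{-i}` lies in `H_i`, so `J x = i x ∈ L ∩ J(L) = L ∩ Lᗮ = 0`;
this gives injectivity. Surjectivity comes from `H = L ⊕ Lᗮ = L + J(L)`. The statement for
`Π_i` is the one for `Π_{-i}` applied to `-J`, which satisfies the same hypotheses.
-/

/-- The orthogonal projection `Π_i = ½(I − iJ)` onto the `i`-eigenspace of `J`. -/
noncomputable def PiP {H : Type*} [NormedAddCommGroup H] [InnerProductSpace ℂ H]
    (J : H →L[ℂ] H) : H →L[ℂ] H := (2 : ℂ)⁻¹ • (1 - Complex.I • J)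

/-- The orthogonal projection `Π_{−i} = ½(I + iJ)` onto the `−i`-eigenspace of `J`. -/
noncomputable def PiM {H : Type*} [NormedAddCommGroup H] [InnerProductSpace ℂ H]
    (J : H →L[ℂ] H) : H →L[ℂ] H := (2 : ℂ)⁻¹ • (1 + Complex.I • J)

open Complex Submodule

section

variable {H : Type*} [NormedAddCommGroup H] [InnerProductSpace ℂ H] {J : H →L[ℂ] H}

theorem apply_apply_eq_neg_of_adjoint [CompleteSpace H]
    (hJunitary : (ContinuousLinearMap.adjoint J).comp J = 1)
    (hJskew : ContinuousLinearMap.adjoint J = -J) (x : H) : J (J x) = -x := by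
  simpa [hJskew, neg_eq_iff_eq_neg] using DFunLike.congr_fun hJunitary x

theorem PiP_eq_PiM_neg : PiP J = PiM (-J) := by
  simp [PiP, PiM, sub_eq_add_neg]

theorem ker_sub_I_eq_ker_neg_add_I :
    LinearMap.ker ((J - I • (1 : H →L[ℂ] H) : H →L[ℂ] H) : H →ₗ[ℂ] H) =
      LinearMap.ker ((-J + I • (1 : H →L[ℂ] H) : H →L[ℂ] H) : H →ₗ[ℂ] H) := by
  rw [neg_add_eq_sub, ← neg_sub, ContinuousLinearMap.toLinearMap_neg, LinearMap.ker_neg]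

theorem PiM_apply (x : H) : PiM J x = (2 : ℂ)⁻¹ • (x + I • J x) := by
  simp [PiM, smul_add]

theorem mem_ker_add_I_iff {y : H} :
    y ∈ LinearMap.ker ((J + I • (1 : H →L[ℂ] H) : H →L[ℂ] H) : H →ₗ[ℂ] H) ↔ J y = -(I • y) := by
  simp [add_eq_zero_iff_eq_neg]

theorem PiM_apply_of_mem_ker {y : H}
    (hy : y ∈ LinearMap.ker ((J + I • (1 : H →L[ℂ] H) : H →L[ℂ] H) : H →ₗ[ℂ] H)) :
    PiM J y = y := by
  rw [PiM_apply, mem_ker_add_I_iff.mp hy, smul_neg, smul_smul, I_mul_I, neg_one_smul, neg_neg,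
    ← two_smul ℂ y, smul_smul, inv_mul_cancel₀ two_ne_zero, one_smul]

variable (hJJ : ∀ x, J (J x) = -x)
include hJJ

theorem PiM_apply_apply (x : H) : PiM J (J x) = -(I • PiM J x) := by
  simp only [PiM_apply, hJJ, smul_neg, smul_add, smul_comm I (2 : ℂ)⁻¹, smul_smul I I, I_mul_I,
    neg_one_smul]
  abel

theorem PiM_apply_mem_ker (x : H) :
    PiM J x ∈ LinearMap.ker ((J + I • (1 : H →L[ℂ] H) : H →L[ℂ] H) : H →ₗ[ℂ] H) := by
  rw [mem_ker_add_I_iff, ← PiM_apply_apply hJJ]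
  simp [PiM_apply]

theorem apply_eq_I_smul_of_PiM_apply_eq_zero {x : H} (hx : PiM J x = 0) : J x = I • x := by
  have hsum : x + I • J x = 0 :=
    (smul_eq_zero_iff_right (inv_ne_zero (two_ne_zero (α := ℂ)))).mp (by rwa [PiM_apply] at hx)
  have := congrArg J hsum
  rw [map_add, map_smul, hJJ, map_zero, smul_neg, add_neg_eq_zero] at this
  exact this

variable {L : Submodule ℂ H} (hLag : Lᗮ = L.map (J : H →ₗ[ℂ] H))
include hLag

theorem eq_zero_of_mem_of_apply_mem {x : H} (hx : x ∈ L) (hJx : J x ∈ L) : x = 0 := by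
  have hJx' : J x ∈ Lᗮ := hLag ▸ mem_map_of_mem hx
  have hJx0 : J x = 0 := by
    simpa [L.inf_orthogonal_eq_bot] using (mem_inf.mpr ⟨hJx, hJx'⟩ : J x ∈ L ⊓ Lᗮ)
  rw [← neg_eq_zero, ← hJJ x, hJx0, map_zero]

theorem PiM_injOn : Set.InjOn (PiM J) L := by
  intro x hx y hy hxy
  have hxy' : PiM J (x - y) = 0 := by rw [map_sub, hxy, sub_self]
  have hmem : x - y ∈ L := L.sub_mem hx hy
  rw [← sub_eq_zero]
  refine eq_zero_of_mem_of_apply_mem hJJ hLag hmem ?_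
  rw [apply_eq_I_smul_of_PiM_apply_eq_zero hJJ hxy']
  exact L.smul_mem I hmem

/-- Write `y = p + J c` with `p, c ∈ L`; since `Π_{-i} J = -i Π_{-i}`, the map `Π_{-i}` sends
`p - i c ∈ L` to `Π_{-i} y = y`. -/
theorem PiM_surjOn [L.HasOrthogonalProjection] :
    Set.SurjOn (PiM J) L
      (LinearMap.ker ((J + I • (1 : H →L[ℂ] H) : H →L[ℂ] H) : H →ₗ[ℂ] H) : Set H) := by
  intro y hy
  obtain ⟨p, hp, q, hq, rfl⟩ := L.exists_add_mem_mem_orthogonal y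
  rw [hLag] at hq
  obtain ⟨c, hc, rfl⟩ := hq
  refine ⟨p - I • c, L.sub_mem hp (L.smul_mem I hc), ?_⟩
  rw [← PiM_apply_of_mem_ker hy, map_sub, map_smul, map_add]
  simp [PiM_apply_apply hJJ, sub_eq_add_neg]

theorem PiM_bijOn [L.HasOrthogonalProjection] :
    Set.BijOn (PiM J) L
      (LinearMap.ker ((J + I • (1 : H →L[ℂ] H) : H →L[ℂ] H) : H →ₗ[ℂ] H) : Set H) :=
  ⟨fun x _ ↦ PiM_apply_mem_ker hJJ x, PiM_injOn hJJ hLag, PiM_surjOn hJJ hLag⟩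

theorem PiP_bijOn [L.HasOrthogonalProjection] :
    Set.BijOn (PiP J) L
      (LinearMap.ker ((J - I • (1 : H →L[ℂ] H) : H →L[ℂ] H) : H →ₗ[ℂ] H) : Set H) := by
  have hnegJJ : ∀ x, (-J) (-J x) = -x := by simpa using hJJ
  have hLagNeg : Lᗮ = L.map ((-J : H →L[ℂ] H) : H →ₗ[ℂ] H) := by
    rw [ContinuousLinearMap.toLinearMap_neg, Submodule.map_neg, hLag]
  rw [PiP_eq_PiM_neg, ker_sub_I_eq_ker_neg_add_I]
  exact PiM_bijOn hnegJJ hLagNeg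

end

/-- For `J` unitary with `J* = −J` and `L` a closed Lagrangian subspace
(`Lᗮ = J(L)`), the (continuous, linear) projections `Π_{±i} = ½(I ∓ iJ)`
restrict to bijections from `L` onto the eigenspaces `H_{±i} = ker(J ∓ i·I)`. -/
theorem stmt5 {H : Type*} [NormedAddCommGroup H] [InnerProductSpace ℂ H] [CompleteSpace H]
    (J : H →L[ℂ] H)
    (hJunitary : (ContinuousLinearMap.adjoint J).comp J = 1 ∧
      J.comp (ContinuousLinearMap.adjoint J) = 1)
    (hJskew : ContinuousLinearMap.adjoint J = -J)
    (L : Submodule ℂ H) (hL : IsClosed (L : Set H))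
    (hLag : Lᗮ = L.map (J : H →ₗ[ℂ] H)) :
    Continuous (⇑(PiP J)) ∧ Continuous (⇑(PiM J)) ∧
    Set.BijOn (⇑(PiP J)) (L : Set H)
      ((LinearMap.ker ((J - Complex.I • (1 : H →L[ℂ] H) : H →L[ℂ] H) : H →ₗ[ℂ] H) : Submodule ℂ H) : Set H) ∧
    Set.BijOn (⇑(PiM J)) (L : Set H)
      ((LinearMap.ker ((J + Complex.I • (1 : H →L[ℂ] H) : H →L[ℂ] H) : H →ₗ[ℂ] H) : Submodule ℂ H) : Set H) := by
  have hJJ := apply_apply_eq_neg_of_adjoint hJunitary.1 hJskew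
  have : CompleteSpace L := hL.completeSpace_coe
  exact ⟨(PiP J).continuous, (PiM J).continuous, PiP_bijOn hJJ hLag, PiM_bijOn hJJ hLag⟩
end

section
/- Let H be a complex Hilbert space, J : H → H a unitary operator with J* = −J, and L ⊆ H a closed Lagrangian subspace (L^⊥ = J(L)). Then the operator Φ(L) := Π_{−i} ∘ (Π_i|_L)^{−1}, defined using the bijection Π_i|_L : L → H_i, is a well-defined unitary operator (a surjective linear isometry) from H_i = ker(J − i·I) onto H_{−i} = ker(J + i·I). -/
/-- The `i`-eigenspace `H_i = ker(J − i·I)` of `J`. -/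
noncomputable def eigP {H : Type*} [NormedAddCommGroup H] [InnerProductSpace ℂ H]
    (J : H →L[ℂ] H) : Submodule ℂ H := LinearMap.ker ((J - Complex.I • (1 : H →L[ℂ] H) : H →L[ℂ] H) : H →ₗ[ℂ] H)

/-- The `−i`-eigenspace `H_{−i} = ker(J + i·I)` of `J`. -/
noncomputable def eigM {H : Type*} [NormedAddCommGroup H] [InnerProductSpace ℂ H]
    (J : H →L[ℂ] H) : Submodule ℂ H := LinearMap.ker ((J + Complex.I • (1 : H →L[ℂ] H) : H →L[ℂ] H) : H →ₗ[ℂ] H)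

open Complex
open scoped ComplexInnerProductSpace

section

variable {H : Type*} [NormedAddCommGroup H] [InnerProductSpace ℂ H] {J : H →L[ℂ] H}

theorem PiP_apply (J : H →L[ℂ] H) (x : H) : PiP J x = (2 : ℂ)⁻¹ • (x - I • J x) := by
  simp [PiP]

theorem PiM_eq_PiP_neg (J : H →L[ℂ] H) : PiM J = PiP (-J) := by
  simp [PiM, PiP]

theorem mem_eigP_iff {x : H} : x ∈ eigP J ↔ J x = I • x := by
  simp [eigP, sub_eq_zero]

theorem eigM_eq_eigP_neg (J : H →L[ℂ] H) : eigM J = eigP (-J) := by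
  ext x
  simp [eigM, mem_eigP_iff, add_eq_zero_iff_eq_neg, neg_eq_iff_eq_neg]

theorem PiP_mem_eigP (hJ : ∀ x, J (J x) = -x) (x : H) : PiP J x ∈ eigP J := by
  rw [mem_eigP_iff, PiP_apply, map_smul, map_sub, map_smul, hJ]
  match_scalars <;> ring_nf; norm_num [I_sq]

theorem PiP_apply_of_mem_eigP {y : H} (hy : y ∈ eigP J) : PiP J y = y := by
  rw [PiP_apply, mem_eigP_iff.mp hy, smul_smul, I_mul_I]
  module

theorem PiP_apply_J (hJ : ∀ x, J (J x) = -x) (w : H) : PiP J (J w) = I • PiP J w := by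
  rw [PiP_apply, PiP_apply, hJ]
  match_scalars <;> ring_nf; norm_num [I_sq]

theorem eq_zero_of_PiP_eq_zero {x : H} (hx : ⟪J x, x⟫ = 0) (h : PiP J x = 0) : x = 0 := by
  have hx_eq : x = I • J x := by
    rw [PiP_apply, smul_eq_zero, sub_eq_zero] at h
    exact h.resolve_left (by norm_num)
  refine (inner_self_eq_zero (𝕜 := ℂ)).mp ?_
  calc ⟪x, x⟫ = ⟪I • J x, x⟫ := by rw [← hx_eq]
    _ = 0 := by rw [inner_smul_left, hx, mul_zero]

theorem norm_PiM_eq_norm_PiP {x : H} (hx : ⟪J x, x⟫ = 0) : ‖PiM J x‖ = ‖PiP J x‖ := by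
  have : ⟪I • J x, x⟫ = 0 := by rw [inner_smul_left, hx, mul_zero]
  simp only [PiM_eq_PiP_neg, PiP_apply, norm_smul, neg_apply, smul_neg,
    sub_neg_eq_add, norm_sub_eq_norm_add this]

variable {L : Submodule ℂ H}

theorem inner_apply_self_eq_zero_of_isotropic (hL : L.map (J : H →ₗ[ℂ] H) ≤ Lᗮ) {x : H}
    (hx : x ∈ L) : ⟪J x, x⟫ = 0 :=
  Submodule.inner_left_of_mem_orthogonal hx (hL (Submodule.mem_map_of_mem hx))

variable [L.HasOrthogonalProjection]

theorem exists_mem_PiP_eq (hJ : ∀ x, J (J x) = -x) (hL : Lᗮ ≤ L.map (J : H →ₗ[ℂ] H)) {y : H}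
    (hy : y ∈ eigP J) : ∃ u ∈ L, PiP J u = y := by
  obtain ⟨x, hx, z, hz, rfl⟩ := L.exists_add_mem_mem_orthogonal y
  obtain ⟨w, hw, rfl⟩ := hL hz
  refine ⟨x + I • w, L.add_mem hx (L.smul_mem I hw), ?_⟩
  rw [map_add, map_smul, ← PiP_apply_J hJ, ← map_add]
  exact PiP_apply_of_mem_eigP hy

noncomputable def lagrangianEquivEigP (hJ : ∀ x, J (J x) = -x)
    (hLag : Lᗮ = L.map (J : H →ₗ[ℂ] H)) : L ≃ₗ[ℂ] eigP J :=
  LinearEquiv.ofBijective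
    (((PiP J : H →ₗ[ℂ] H) ∘ₗ L.subtype).codRestrict (eigP J) (PiP_mem_eigP hJ ·))
    ⟨(injective_iff_map_eq_zero _).mpr fun x hx =>
        Subtype.ext (eq_zero_of_PiP_eq_zero
          (inner_apply_self_eq_zero_of_isotropic hLag.ge x.2) (congrArg Subtype.val hx)),
      fun y =>
        let ⟨u, hu, hPu⟩ := exists_mem_PiP_eq hJ hLag.le y.2
        ⟨⟨u, hu⟩, Subtype.ext hPu⟩⟩

theorem coe_lagrangianEquivEigP_apply (hJ : ∀ x, J (J x) = -x)
    (hLag : Lᗮ = L.map (J : H →ₗ[ℂ] H)) (u : L) :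
    (lagrangianEquivEigP hJ hLag u : H) = PiP J u :=
  rfl

noncomputable def lagrangianEquivEigM (hJ : ∀ x, J (J x) = -x)
    (hLag : Lᗮ = L.map (J : H →ₗ[ℂ] H)) : L ≃ₗ[ℂ] eigM J :=
  (lagrangianEquivEigP (J := -J) (by simpa using hJ)
      (by rw [ContinuousLinearMap.toLinearMap_neg, Submodule.map_neg, hLag])).trans
    (LinearEquiv.ofEq _ _ (eigM_eq_eigP_neg J).symm)

theorem coe_lagrangianEquivEigM_apply (hJ : ∀ x, J (J x) = -x)
    (hLag : Lᗮ = L.map (J : H →ₗ[ℂ] H)) (u : L) :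
    (lagrangianEquivEigM hJ hLag u : H) = PiM J u := by
  rw [PiM_eq_PiP_neg]
  rfl

noncomputable def lagrangianUnitary (hJ : ∀ x, J (J x) = -x)
    (hLag : Lᗮ = L.map (J : H →ₗ[ℂ] H)) : eigP J ≃ₗᵢ[ℂ] eigM J where
  toLinearEquiv := (lagrangianEquivEigP hJ hLag).symm.trans (lagrangianEquivEigM hJ hLag)
  norm_map' y := by
    obtain ⟨u, rfl⟩ := (lagrangianEquivEigP hJ hLag).surjective y
    simpa [coe_lagrangianEquivEigM_apply, coe_lagrangianEquivEigP_apply]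
      using norm_PiM_eq_norm_PiP (inner_apply_self_eq_zero_of_isotropic hLag.ge u.2)

theorem lagrangianUnitary_apply_PiP (hJ : ∀ x, J (J x) = -x)
    (hLag : Lᗮ = L.map (J : H →ₗ[ℂ] H)) {u : H} (hu : u ∈ L) (h : PiP J u ∈ eigP J) :
    (lagrangianUnitary hJ hLag ⟨PiP J u, h⟩ : H) = PiM J u := by
  have : (⟨PiP J u, h⟩ : eigP J) = lagrangianEquivEigP hJ hLag ⟨u, hu⟩ := rfl
  simp [lagrangianUnitary, this, coe_lagrangianEquivEigM_apply]

end

/-- For `J` unitary with `J* = −J` and `L` a closed Lagrangian subspace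
(`Lᗮ = J(L)`), the operator `Φ(L) := Π_{−i} ∘ (Π_i|_L)⁻¹` is a well-defined
unitary (surjective linear isometry) from `H_i` onto `H_{−i}`; it is characterized
by `Φ(Π_i u) = Π_{−i} u` for all `u ∈ L`. -/
theorem stmt6 {H : Type*} [NormedAddCommGroup H] [InnerProductSpace ℂ H] [CompleteSpace H]
    (J : H →L[ℂ] H)
    (hJunitary : (ContinuousLinearMap.adjoint J).comp J = 1 ∧
      J.comp (ContinuousLinearMap.adjoint J) = 1)
    (hJskew : ContinuousLinearMap.adjoint J = -J)
    (L : Submodule ℂ H) (hL : IsClosed (L : Set H))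
    (hLag : Lᗮ = L.map (J : H →ₗ[ℂ] H)) :
    ∃ Φ : (eigP J) ≃ₗᵢ[ℂ] (eigM J),
      ∀ u ∈ L, ∀ h : PiP J u ∈ eigP J, (Φ ⟨PiP J u, h⟩ : H) = PiM J u := by
  have hJ (x : H) : J (J x) = -x := by
    simpa [hJskew, neg_eq_iff_eq_neg] using congr($(hJunitary.1) x)
  have : CompleteSpace L := hL.completeSpace_coe
  exact ⟨lagrangianUnitary hJ hLag, fun u hu h => lagrangianUnitary_apply_PiP hJ hLag hu h⟩
end

section
/- Let H be a complex Hilbert space and let P, Q be orthogonal projections on H such that P − Q is a compact operator. Then the subspaces (range Q) ∩ (ker P) and (range P) ∩ (ker Q) are finite-dimensional, and the operator T : range Q → range P, T u := P u, has closed range; hence P and Q form a Fredholm pair and T is a Fredholm operator whose index is ind(P,Q) = dim(ker P ∩ range Q) − dim(range P ∩ ker Q). -/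
/-!
On `range Q ⊓ ker P` the compact operator `Q - P` acts as the identity, so this subspace lies in
the eigenspace of a compact operator for the eigenvalue `1` and is finite-dimensional; the same
holds for `range P ⊓ ker Q`. On `range Q`, `T` is `ι + (P - Q) ∘ ι` with `ι` the isometric
inclusion, and an isometry plus a compact operator is bounded below on the orthogonal complement
of its kernel: a sequence of unit vectors on which it tends to `0` has a convergent subsequence,
whose limit would be a unit vector in the kernel. Hence `T` has closed range. Finally
`ker T = range Q ⊓ ker P`, and since `P` and `Q` are self-adjoint, the orthogonal complement of
`range T` in `range P` is `range P ⊓ ker Q`.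
-/

/-- The operator `T : range Q → range P`, `T u := P u`, given by restricting `P`
to `range Q` and corestricting to `range P`. -/
noncomputable def restrictProj {H : Type*} [NormedAddCommGroup H] [InnerProductSpace ℂ H]
    (P Q : H →L[ℂ] H) : ↥(LinearMap.range (Q : H →ₗ[ℂ] H)) →ₗ[ℂ] ↥(LinearMap.range (P : H →ₗ[ℂ] H)) :=
  (LinearMap.codRestrict (LinearMap.range (P : H →ₗ[ℂ] H)) (P : H →ₗ[ℂ] H)
    (fun x => ⟨x, rfl⟩)).domRestrict (LinearMap.range (Q : H →ₗ[ℂ] H))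

open Filter Topology ContinuousLinearMap

theorem exists_subseq_tendsto_of_isometry_add_compact {𝕜 X Y : Type*}
    [NontriviallyNormedField 𝕜]
    [NormedAddCommGroup X] [NormedSpace 𝕜 X] [CompleteSpace X]
    [NormedAddCommGroup Y] [NormedSpace 𝕜 Y] (L : X →ₗᵢ[𝕜] Y) {K : X →L[𝕜] Y}
    (hK : IsCompactOperator K) {R : ℝ} {u : ℕ → X} (hu : ∀ n, ‖u n‖ ≤ R) {y : Y}
    (hy : Tendsto (fun n ↦ (L.toContinuousLinearMap + K) (u n)) atTop (𝓝 y)) :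
    ∃ x, ∃ φ : ℕ → ℕ, StrictMono φ ∧ Tendsto (u ∘ φ) atTop (𝓝 x) := by
  obtain ⟨C, hC, hKC⟩ := hK.image_closedBall_subset_compact (f := (K : X →ₗ[𝕜] Y)) R
  obtain ⟨w, -, φ, hφ, hKw⟩ :=
    hC.tendsto_subseq fun n ↦ hKC ⟨u n, by simpa using hu n, rfl⟩
  have hLu : Tendsto (L ∘ u ∘ φ) atTop (𝓝 (y - w)) := by
    convert (hy.comp hφ.tendsto_atTop).sub hKw using 2
    simp
  have hu_cauchy : CauchySeq (u ∘ φ) := by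
    have := hLu.cauchySeq
    rw [CauchySeq, ← Filter.map_map] at this
    exact L.isometry.isUniformInducing.cauchy_map_iff.mp this
  obtain ⟨x, hx⟩ := cauchySeq_tendsto_of_complete hu_cauchy
  exact ⟨x, φ, hφ, hx⟩

theorem exists_antilipschitzWith_isometry_add_compact {𝕜 X Y : Type*} [RCLike 𝕜]
    [NormedAddCommGroup X] [NormedSpace 𝕜 X] [CompleteSpace X]
    [NormedAddCommGroup Y] [NormedSpace 𝕜 Y] (L : X →ₗᵢ[𝕜] Y) {K : X →L[𝕜] Y}
    (hK : IsCompactOperator K) (hinj : Function.Injective (L.toContinuousLinearMap + K)) :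
    ∃ c, AntilipschitzWith c (L.toContinuousLinearMap + K) := by
  set S := L.toContinuousLinearMap + K
  rw [antilipschitzWith_iff_exists_mul_le_norm]
  by_contra! h
  have h_unit : ∀ n : ℕ, ∃ v : X, ‖v‖ = 1 ∧ ‖S v‖ < 1 / (n + 1) := by
    intro n
    obtain ⟨x, hx⟩ := h (1 / (n + 1)) (by positivity)
    have hx0 : x ≠ 0 := by
      rintro rfl
      simp at hx
    refine ⟨(‖x‖⁻¹ : 𝕜) • x, norm_smul_inv_norm hx0, ?_⟩
    rw [map_smul, norm_smul, norm_inv, RCLike.norm_ofReal, abs_norm,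
      inv_mul_lt_iff₀ (norm_pos_iff.mpr hx0), mul_comm]
    exact hx
  choose v hv_norm hv_small using h_unit
  have hSv : Tendsto (fun n ↦ S (v n)) atTop (𝓝 0) :=
    squeeze_zero_norm (fun n ↦ (hv_small n).le) tendsto_one_div_add_atTop_nhds_zero_nat
  obtain ⟨x, φ, hφ, hx⟩ :=
    exists_subseq_tendsto_of_isometry_add_compact L hK (fun n ↦ (hv_norm n).le) hSv
  have hx_norm : ‖x‖ = 1 := tendsto_nhds_unique hx.norm (by simp [hv_norm])
  have hSx : S x = 0 :=
    tendsto_nhds_unique ((S.continuous.tendsto x).comp hx) (hSv.comp hφ.tendsto_atTop)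
  rw [hinj (hSx.trans (map_zero S).symm)] at hx_norm
  simp at hx_norm

theorem isClosed_range_isometry_add_compact {𝕜 X Y : Type*} [RCLike 𝕜]
    [NormedAddCommGroup X] [InnerProductSpace 𝕜 X] [CompleteSpace X]
    [NormedAddCommGroup Y] [NormedSpace 𝕜 Y] (L : X →ₗᵢ[𝕜] Y) {K : X →L[𝕜] Y}
    (hK : IsCompactOperator K) :
    IsClosed (Set.range (L.toContinuousLinearMap + K)) := by
  set S := L.toContinuousLinearMap + K
  set N := LinearMap.ker (S : X →ₗ[𝕜] Y)
  have : CompleteSpace N := S.isClosed_ker.completeSpace_coe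
  set S' := S.comp Nᗮ.subtypeL
  have hS' : S' = (L.comp Nᗮ.subtypeₗᵢ).toContinuousLinearMap + K.comp Nᗮ.subtypeL :=
    rfl
  have hinj : Function.Injective S' := by
    rw [← ContinuousLinearMap.coe_coe, ← LinearMap.ker_eq_bot, Submodule.eq_bot_iff]
    intro x hx
    exact Subtype.ext <| (Submodule.mem_bot 𝕜).mp <| N.inf_orthogonal_eq_bot ▸ ⟨hx, x.2⟩
  have hrange : Set.range S' = Set.range S := by
    refine (Set.range_comp_subset_range Nᗮ.subtypeL S).antisymm ?_
    rintro _ ⟨x, rfl⟩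
    obtain ⟨a, ha, b, hb, rfl⟩ := N.exists_add_mem_mem_orthogonal x
    exact ⟨⟨b, hb⟩, by simp [show S a = 0 from ha]⟩
  obtain ⟨c, hc⟩ := exists_antilipschitzWith_isometry_add_compact (L.comp Nᗮ.subtypeₗᵢ)
    (hK.comp_clm Nᗮ.subtypeL) (hS' ▸ hinj)
  rw [← hrange, hS']
  exact hc.isClosed_range (ContinuousLinearMap.uniformContinuous _)

theorem ContinuousLinearMap.IsIdempotentElem.apply_of_mem_range {R M : Type*} [Semiring R]
    [TopologicalSpace M] [AddCommMonoid M] [Module R M] {p : M →L[R] M} (hp : IsIdempotentElem p)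
    {x : M} (hx : x ∈ LinearMap.range (p : M →ₗ[R] M)) : p x = x :=
  (LinearMap.IsIdempotentElem.mem_range_iff hp.toLinearMap).mp hx

def Submodule.comapSubtypeEquivInf {R M : Type*} [Ring R] [AddCommGroup M] [Module R M]
    (V W : Submodule R M) : W.comap V.subtype ≃ₗ[R] ↥(V ⊓ W) :=
  (LinearEquiv.ofEq _ _ (by ext x; simp)).trans (Submodule.comapSubtypeEquivOfLe inf_le_left)

theorem finiteDimensional_range_inf_ker {𝕜 E : Type*} [RCLike 𝕜] [NormedAddCommGroup E]
    [InnerProductSpace 𝕜 E] [CompleteSpace E] {P Q : E →L[𝕜] E} (hQ : IsIdempotentElem Q)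
    (hQP : IsCompactOperator (Q - P)) :
    FiniteDimensional 𝕜
      ↥(LinearMap.range (Q : E →ₗ[𝕜] E) ⊓ LinearMap.ker (P : E →ₗ[𝕜] E)) := by
  have := ContinuousLinearMap.finite_dimensional_eigenspace hQP 1 one_ne_zero
  refine Submodule.finiteDimensional_of_le (S₂ := Module.End.eigenspace (Q - P).toLinearMap 1)
    fun x ⟨hQx, hPx⟩ ↦ ?_
  rw [Module.End.mem_eigenspace_iff]
  simp [hQ.apply_of_mem_range hQx, show P x = 0 from hPx]

section restrictProj

variable {H : Type*} [NormedAddCommGroup H] [InnerProductSpace ℂ H]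

theorem isClosed_range_restrictProj [CompleteSpace H] {P Q : H →L[ℂ] H}
    (hQ : IsIdempotentElem Q) (hPQ : IsCompactOperator (P - Q)) :
    IsClosed
      (LinearMap.range (restrictProj P Q) : Set (LinearMap.range (P : H →ₗ[ℂ] H))) := by
  set V := LinearMap.range (Q : H →ₗ[ℂ] H)
  have : CompleteSpace V := hQ.isClosed_range.completeSpace_coe
  have hS :
      P.comp V.subtypeL = V.subtypeₗᵢ.toContinuousLinearMap + (P - Q).comp V.subtypeL := by
    ext u
    simp [hQ.apply_of_mem_range u.2]
  have hrange : (LinearMap.range (restrictProj P Q) : Set (LinearMap.range (P : H →ₗ[ℂ] H))) =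
      Subtype.val ⁻¹' Set.range (P.comp V.subtypeL) := by
    ext v
    exact ⟨fun ⟨u, hu⟩ ↦ ⟨u, congr_arg Subtype.val hu⟩,
      fun ⟨u, hu⟩ ↦ ⟨u, Subtype.ext hu⟩⟩
  rw [hrange, hS]
  exact (isClosed_range_isometry_add_compact _ (hPQ.comp_clm _)).preimage continuous_subtype_val

theorem ker_restrictProj (P Q : H →L[ℂ] H) :
    LinearMap.ker (restrictProj P Q) =
      (LinearMap.ker (P : H →ₗ[ℂ] H)).comap
        (LinearMap.range (Q : H →ₗ[ℂ] H)).subtype := by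
  ext u
  exact Subtype.ext_iff

theorem orthogonal_range_restrictProj [CompleteSpace H] {P Q : H →L[ℂ] H}
    (hP : IsStarProjection P) (hQ : IsSelfAdjoint Q) :
    (LinearMap.range (restrictProj P Q))ᗮ =
      (LinearMap.ker (Q : H →ₗ[ℂ] H)).comap
        (LinearMap.range (P : H →ₗ[ℂ] H)).subtype := by
  ext v
  have hPv : P v = v := hP.isIdempotentElem.apply_of_mem_range v.2
  have hinner (w : LinearMap.range (Q : H →ₗ[ℂ] H)) :
      inner ℂ (restrictProj P Q w) v = inner ℂ (w : H) (v : H) := by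
    rw [Submodule.coe_inner]
    exact (hP.isSelfAdjoint.isSymmetric w v).trans (by rw [ContinuousLinearMap.coe_coe, hPv])
  have hker : LinearMap.ker (Q : H →ₗ[ℂ] H) = (LinearMap.range (Q : H →ₗ[ℂ] H))ᗮ := by
    rw [ContinuousLinearMap.orthogonal_range, hQ.adjoint_eq]
  rw [Submodule.mem_comap, Submodule.coe_subtype, hker, Submodule.mem_orthogonal,
    Submodule.mem_orthogonal]
  constructor
  · intro h u hu
    rw [← hinner ⟨u, hu⟩]
    exact h _ (LinearMap.mem_range_self _ _)
  · rintro h _ ⟨w, rfl⟩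
    rw [hinner]
    exact h w w.2

end restrictProj

/-- For orthogonal projections `P, Q` on a complex Hilbert space with `P − Q`
compact, the subspaces `(range Q) ∩ (ker P)` and `(range P) ∩ (ker Q)` are
finite-dimensional and the operator `T : range Q → range P`, `T u = P u`, has
closed range; hence `(P,Q)` is a Fredholm pair and `T` is Fredholm with index
`ind(P,Q) = dim(ker P ∩ range Q) − dim(range P ∩ ker Q)`. -/
theorem stmt10 {H : Type*} [NormedAddCommGroup H] [InnerProductSpace ℂ H] [CompleteSpace H]
    (P Q : H →L[ℂ] H)
    (hPsa : ContinuousLinearMap.adjoint P = P) (hPidem : P.comp P = P)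
    (hQsa : ContinuousLinearMap.adjoint Q = Q) (hQidem : Q.comp Q = Q)
    (hcpt : IsCompactOperator (⇑(P - Q))) :
    FiniteDimensional ℂ ↥(LinearMap.range (Q : H →ₗ[ℂ] H) ⊓ LinearMap.ker (P : H →ₗ[ℂ] H)) ∧
    FiniteDimensional ℂ ↥(LinearMap.range (P : H →ₗ[ℂ] H) ⊓ LinearMap.ker (Q : H →ₗ[ℂ] H)) ∧
    IsClosed ((LinearMap.range (restrictProj P Q) :
        Submodule ℂ ↥(LinearMap.range (P : H →ₗ[ℂ] H))) : Set ↥(LinearMap.range (P : H →ₗ[ℂ] H))) ∧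
    FiniteDimensional ℂ ↥(LinearMap.ker (restrictProj P Q)) ∧
    FiniteDimensional ℂ ↥((LinearMap.range (restrictProj P Q))ᗮ) ∧
    (Module.finrank ℂ ↥(LinearMap.ker (restrictProj P Q)) : ℤ)
        - (Module.finrank ℂ ↥((LinearMap.range (restrictProj P Q))ᗮ) : ℤ)
      = (Module.finrank ℂ ↥(LinearMap.ker (P : H →ₗ[ℂ] H) ⊓ LinearMap.range (Q : H →ₗ[ℂ] H)) : ℤ)
        - (Module.finrank ℂ ↥(LinearMap.range (P : H →ₗ[ℂ] H) ⊓ LinearMap.ker (Q : H →ₗ[ℂ] H)) : ℤ) := by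
  have hP : IsStarProjection P := ⟨hPidem, ContinuousLinearMap.isSelfAdjoint_iff'.mpr hPsa⟩
  have hQ : IsStarProjection Q := ⟨hQidem, ContinuousLinearMap.isSelfAdjoint_iff'.mpr hQsa⟩
  have hQP : IsCompactOperator (Q - P) := by simpa using hcpt.neg
  let eKer := (LinearEquiv.ofEq _ _ (ker_restrictProj P Q)).trans
    (Submodule.comapSubtypeEquivInf _ _)
  let eCoker := (LinearEquiv.ofEq _ _ (orthogonal_range_restrictProj hP hQ.isSelfAdjoint)).trans
    (Submodule.comapSubtypeEquivInf _ _)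
  have hfinQP := finiteDimensional_range_inf_ker hQ.isIdempotentElem hQP
  have hfinPQ := finiteDimensional_range_inf_ker hP.isIdempotentElem hcpt
  refine ⟨hfinQP, hfinPQ, isClosed_range_restrictProj hQ.isIdempotentElem hcpt,
    eKer.symm.finiteDimensional, eCoker.symm.finiteDimensional, ?_⟩
  rw [eKer.finrank_eq, eCoker.finrank_eq, inf_comm]
end

section
/- Let (λ_n)_{n≥1} be a sequence of nonzero real numbers satisfying |λ_n| ≥ C·n^α for all n, with constants C > 0 and α > 0. Then for every complex s with Re s > 1/α one has the Mellin transform identity (1/Γ((s+1)/2)) · ∫₀^∞ t^{(s−1)/2} · ( Σ_n λ_n·e^{−t·λ_n²} ) dt = Σ_n sign(λ_n)·|λ_n|^{−s}, where both the integral and the series converge absolutely. -/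
/-!
With `w = (s + 1) / 2`, each eigenvalue contributes
`∫₀^∞ t^(w-1) λ e^(-λ² t) dt = Γ(w) λ / (λ²)^w = Γ(w) sign(λ) |λ|^(-s)`.
The integrals of the norms of these terms are `Γ(Re w) |λ|^(-Re s)`, which are summable since
`|λ_n|^(-Re s) ≤ C^(-Re s) (n+1)^(-α Re s)` and `α Re s > 1`; hence the series may be
integrated term by term.
-/

open MeasureTheory

open Filter ENNReal in
theorem MeasureTheory.integrable_tsum_of_summable_integral_norm {α E : Type*}
    [MeasurableSpace α] {μ : Measure α} [NormedAddCommGroup E] [CompleteSpace E]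
    {ι : Type*} [Countable ι] {F : ι → α → E} (hF_int : ∀ i, Integrable (F i) μ)
    (hF_sum : Summable fun i ↦ ∫ a, ‖F i a‖ ∂μ) :
    Integrable (fun a ↦ ∑' i, F i a) μ := by
  have hmeas (i : ι) : AEMeasurable (fun a ↦ ‖F i a‖ₑ) μ := (hF_int i).1.enorm
  have hlint : ∫⁻ a, ∑' i, ‖F i a‖ₑ ∂μ < ∞ := by
    rw [lintegral_tsum hmeas]
    have (i : ι) : ∫⁻ a, ‖F i a‖ₑ ∂μ = ENNReal.ofReal (∫ a, ‖F i a‖ ∂μ) :=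
      (ofReal_integral_norm_eq_lintegral_enorm (hF_int i)).symm
    simp_rw [this, ← ENNReal.ofReal_tsum_of_nonneg (fun i ↦ integral_nonneg fun a ↦ norm_nonneg _)
      hF_sum]
    exact ofReal_lt_top
  have hsum_ae : ∀ᵐ a ∂μ, Summable fun i ↦ F i a := by
    filter_upwards [ae_lt_top' (AEMeasurable.tsum hmeas) hlint.ne] with a ha
    exact (tsum_enorm_ne_top_iff_summable_norm.1 ha.ne).of_norm
  refine ⟨aestronglyMeasurable_of_tendsto_ae atTop
    (fun s ↦ Finset.aestronglyMeasurable_fun_sum s fun i _ ↦ (hF_int i).1)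
    (hsum_ae.mono fun a ha ↦ ha.hasSum), ?_⟩
  calc ∫⁻ a, ‖∑' i, F i a‖ₑ ∂μ ≤ ∫⁻ a, ∑' i, ‖F i a‖ₑ ∂μ :=
        lintegral_mono fun a ↦ enorm_tsum_le_tsum_enorm
    _ < ∞ := hlint

open Set Real Complex

namespace Complex

variable {s : ℂ} {p : ℝ}

lemma integrableOn_cpow_mul_exp_neg_mul_Ioi (hs : 0 < s.re) (hp : 0 < p) :
    IntegrableOn (fun t : ℝ ↦ (t : ℂ) ^ (s - 1) * rexp (-p * t)) (Ioi 0) := by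
  have h := GammaIntegral_convergent hs
  rw [← mul_zero p, ← integrableOn_Ioi_comp_mul_left_iff _ _ hp] at h
  refine IntegrableOn.congr_fun (h.const_mul (1 / (p : ℂ) ^ (s - 1))) (fun t (ht : 0 < t) ↦ ?_)
    measurableSet_Ioi
  have hp' : (p : ℂ) ^ (s - 1) ≠ 0 := by simp [cpow_eq_zero_iff, hp.ne']
  rw [ofReal_mul, mul_cpow_ofReal_nonneg hp.le ht.le, neg_mul]
  field_simp

lemma integral_norm_cpow_mul_exp_neg_mul_Ioi (hs : 0 < s.re) (hp : 0 < p) :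
    ∫ t : ℝ in Ioi 0, ‖(t : ℂ) ^ (s - 1) * rexp (-p * t)‖ = Real.Gamma s.re / p ^ s.re := by
  rw [div_eq_inv_mul, ← inv_rpow hp.le, ← one_div, ← integral_rpow_mul_exp_neg_mul_Ioi hs hp]
  refine setIntegral_congr_fun measurableSet_Ioi fun t (ht : 0 < t) ↦ ?_
  rw [norm_mul, norm_real, Real.norm_eq_abs, Real.abs_exp, norm_cpow_eq_rpow_re_of_pos ht,
    sub_re, one_re, neg_mul]

lemma integral_cpow_mul_exp_neg_mul_Ioi_eq_Gamma_div (hs : 0 < s.re) (hp : 0 < p) :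
    ∫ t : ℝ in Ioi 0, (t : ℂ) ^ (s - 1) * rexp (-p * t) = Gamma s / p ^ s := by
  have h := integral_cpow_mul_exp_neg_mul_Ioi hs hp
  simp_rw [← ofReal_mul, ← ofReal_neg, ← ofReal_exp, ← neg_mul p] at h
  rw [h, one_div, inv_cpow _ _ (arg_ofReal_of_nonneg hp.le ▸ pi_pos.ne), div_eq_inv_mul]

end Complex

section MellinExpSeries

variable {ι : Type*} [Countable ι] {a : ι → ℂ} {p : ι → ℝ} {s : ℂ}

lemma integrableOn_and_hasSum_integral_cpow_mul_tsum_exp (hs : 0 < s.re) (hp : ∀ i, 0 < p i)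
    (h_sum : Summable fun i ↦ ‖a i‖ / p i ^ s.re) :
    IntegrableOn (fun t : ℝ ↦ (t : ℂ) ^ (s - 1) * ∑' i, a i * rexp (-p i * t)) (Ioi 0) ∧
      HasSum (fun i ↦ Gamma s * a i / p i ^ s)
        (∫ t : ℝ in Ioi 0, (t : ℂ) ^ (s - 1) * ∑' i, a i * rexp (-p i * t)) := by
  set F : ι → ℝ → ℂ := fun i t ↦ a i * ((t : ℂ) ^ (s - 1) * rexp (-p i * t))
  have hF : (fun t : ℝ ↦ (t : ℂ) ^ (s - 1) * ∑' i, a i * rexp (-p i * t)) =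
      fun t ↦ ∑' i, F i t := by
    ext t
    rw [← tsum_mul_left]
    exact tsum_congr fun i ↦ mul_left_comm _ _ _
  have hF_int (i : ι) : IntegrableOn (F i) (Ioi 0) :=
    (integrableOn_cpow_mul_exp_neg_mul_Ioi hs (hp i)).const_mul (a i)
  have hF_sum : Summable fun i ↦ ∫ t : ℝ in Ioi 0, ‖F i t‖ := by
    refine (h_sum.mul_left (Real.Gamma s.re)).congr fun i ↦ ?_
    rw [div_eq_mul_inv]
    simp only [F, norm_mul (a i), integral_const_mul,
      integral_norm_cpow_mul_exp_neg_mul_Ioi hs (hp i)]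
    ring
  rw [hF]
  refine ⟨integrable_tsum_of_summable_integral_norm hF_int hF_sum, ?_⟩
  have hF_val (i : ι) : ∫ t : ℝ in Ioi 0, F i t = Gamma s * a i / p i ^ s := by
    rw [integral_const_mul, integral_cpow_mul_exp_neg_mul_Ioi_eq_Gamma_div hs (hp i)]
    ring
  simpa only [hF_val] using hasSum_integral_of_summable_integral_norm hF_int hF_sum

end MellinExpSeries

lemma Real.sign_mul_abs (x : ℝ) : Real.sign x * |x| = x := by
  rcases lt_trichotomy x 0 with hx | rfl | hx
  · rw [Real.sign_of_neg hx, abs_of_neg hx]; ring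
  · rw [abs_zero, mul_zero]
  · rw [Real.sign_of_pos hx, abs_of_pos hx, one_mul]

lemma summable_abs_rpow_neg_of_le_abs {lam : ℕ → ℝ} {C α r : ℝ} (hC : 0 < C) (hα : 0 < α)
    (hgrowth : ∀ n : ℕ, C * ((n : ℝ) + 1) ^ α ≤ |lam n|) (hr : 1 / α < r) :
    Summable fun n ↦ |lam n| ^ (-r) := by
  have hr₀ : 0 < r := (one_div_pos.2 hα).trans hr
  have hαr : 1 < α * r := by rwa [div_lt_iff₀' hα] at hr
  have hshift : Summable fun n : ℕ ↦ ((n : ℝ) + 1) ^ (-(α * r)) := by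
    refine ((summable_nat_add_iff 1).2 (Real.summable_nat_rpow.2 (neg_lt_neg hαr))).congr
      fun n ↦ ?_
    push_cast
    rfl
  refine hshift.mul_left (C ^ (-r)) |>.of_nonneg_of_le (fun n ↦ by positivity) fun n ↦ ?_
  calc |lam n| ^ (-r) ≤ (C * ((n : ℝ) + 1) ^ α) ^ (-r) :=
        Real.rpow_le_rpow_of_nonpos (by positivity) (hgrowth n) (neg_nonpos.2 hr₀.le)
    _ = C ^ (-r) * ((n : ℝ) + 1) ^ (-(α * r)) := by
        rw [Real.mul_rpow hC.le (by positivity), ← Real.rpow_mul (by positivity), mul_neg]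

lemma ofReal_div_cpow_sq_eq_sign_mul_cexp {x : ℝ} (hx : x ≠ 0) (s : ℂ) :
    (x : ℂ) / ((x ^ 2 : ℝ) : ℂ) ^ ((s + 1) / 2) = Real.sign x * cexp (-s * Real.log |x|) := by
  have hlog : Complex.log ((x ^ 2 : ℝ) : ℂ) = 2 * Real.log |x| := by
    rw [← ofReal_log (sq_nonneg x), Real.log_pow, Real.log_abs]
    push_cast
    rfl
  have hx' : (x : ℂ) = Real.sign x * cexp (Real.log |x|) := by
    rw [← ofReal_exp, Real.exp_log (abs_pos.2 hx), ← ofReal_mul, Real.sign_mul_abs]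
  rw [cpow_def_of_ne_zero (by exact_mod_cast pow_ne_zero 2 hx), hlog, hx', mul_div_assoc,
    ← Complex.exp_sub]
  ring_nf

lemma norm_sign_mul_cexp_neg_mul_log {x : ℝ} (hx : x ≠ 0) (s : ℂ) :
    ‖(Real.sign x : ℂ) * cexp (-s * Real.log |x|)‖ = |x| ^ (-s.re) := by
  have hsign : |Real.sign x| = 1 := by
    rcases Real.sign_apply_eq_of_ne_zero x hx with h | h <;> simp [h]
  rw [norm_mul, norm_real, Real.norm_eq_abs, hsign, one_mul, norm_exp,
    Real.rpow_def_of_pos (abs_pos.2 hx)]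
  simp only [neg_mul, neg_re, mul_re, ofReal_re, ofReal_im, mul_zero, sub_zero]
  ring_nf

/-- Mellin transform identity for the eta function: for a sequence `(λ_n)_{n≥1}`
(here `lam n = λ_{n+1}`) of nonzero reals with `|λ_n| ≥ C·n^α`, `C > 0`, `α > 0`,
and `Re s > 1/α`,
`(1/Γ((s+1)/2)) ∫₀^∞ t^{(s−1)/2} (Σ λ_n e^{−tλ_n²}) dt = Σ sign(λ_n)|λ_n|^{−s}`,
where the integral and the series converge absolutely
(`|λ|^{−s} := exp(−s·log|λ|)`). -/
theorem stmt13 (lam : ℕ → ℝ) (C α : ℝ) (hC : 0 < C) (hα : 0 < α)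
    (hne : ∀ n, lam n ≠ 0)
    (hgrowth : ∀ n : ℕ, C * ((n : ℝ) + 1) ^ α ≤ |lam n|)
    (s : ℂ) (hs : 1 / α < s.re) :
    IntegrableOn
      (fun t : ℝ => (t : ℂ) ^ ((s - 1) / 2)
        * ∑' n, (lam n : ℂ) * (Real.exp (-t * (lam n) ^ 2) : ℂ))
      (Set.Ioi (0 : ℝ)) ∧
    Summable (fun n => ‖(Real.sign (lam n) : ℂ) * Complex.exp (-s * Real.log |lam n|)‖) ∧
    (1 / Complex.Gamma ((s + 1) / 2))
        * ∫ t in Set.Ioi (0 : ℝ), (t : ℂ) ^ ((s - 1) / 2)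
            * ∑' n, (lam n : ℂ) * (Real.exp (-t * (lam n) ^ 2) : ℂ)
      = ∑' n, (Real.sign (lam n) : ℂ) * Complex.exp (-s * Real.log |lam n|) := by
  have hs' : 0 < ((s + 1) / 2).re := by
    have := (one_div_pos.2 hα).trans hs
    rw [div_ofNat_re, add_re, one_re]
    positivity
  have hsum := summable_abs_rpow_neg_of_le_abs hC hα hgrowth hs
  have hterm n := ofReal_div_cpow_sq_eq_sign_mul_cexp (hne n) s
  have hnorm n := norm_sign_mul_cexp_neg_mul_log (hne n) s
  have hsq n : 0 < lam n ^ 2 := pow_two_pos_of_ne_zero (hne n)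
  have h_sum : Summable fun n ↦ ‖(lam n : ℂ)‖ / (lam n ^ 2) ^ ((s + 1) / 2).re := by
    refine hsum.congr fun n ↦ ?_
    rw [← hnorm n, ← hterm n, norm_div, norm_cpow_eq_rpow_re_of_pos (hsq n)]
  obtain ⟨hint, hmellin⟩ := integrableOn_and_hasSum_integral_cpow_mul_tsum_exp hs' hsq h_sum
  have hintegrand : (fun t : ℝ ↦ (t : ℂ) ^ ((s - 1) / 2)
      * ∑' n, (lam n : ℂ) * (Real.exp (-t * (lam n) ^ 2) : ℂ)) =
      fun t : ℝ ↦ (t : ℂ) ^ ((s + 1) / 2 - 1) * ∑' n, (lam n : ℂ) * rexp (-(lam n ^ 2) * t) := by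
    funext t
    rw [show (s - 1) / 2 = (s + 1) / 2 - 1 by ring]
    simp_rw [neg_mul, mul_comm t]
  rw [hintegrand]
  refine ⟨hint, hsum.congr fun n ↦ (hnorm n).symm, ?_⟩
  rw [← hmellin.tsum_eq, ← tsum_mul_left]
  refine tsum_congr fun n ↦ ?_
  rw [← hterm n]
  field_simp [Gamma_ne_zero_of_re_pos hs']
end

section
/- Let V be a finite-dimensional complex inner product space and J : V → V a unitary operator with J* = −J. Then there exists a subspace L ⊆ V with L^⊥ = J(L) (a Lagrangian subspace) if and only if dim ker(J − i·I) = dim ker(J + i·I). -/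
/-!
Since `J² = -1`, the space splits as `V = V₊ ⊕ V₋` into the `±i`-eigenspaces, which are
orthogonal because `J` is skew-adjoint. As `J` is injective, `L` is Lagrangian iff `J(L) ⊥ L` and
`2 dim L = dim V`. An isotropic `L` meets neither eigenspace, since `⟪x, Jx⟫ = ±i‖x‖²` on `V±`;
so `dim L ≤ dim V₊, dim V₋`, and `2 dim L = dim V₊ + dim V₋` forces equality. Conversely, if the
dimensions agree, the graph of an isometry `V₊ → V₋` is Lagrangian: the cross terms of
`⟪x + f x, J (y + f y)⟫ = i (⟪x, y⟫ - ⟪f x, f y⟫)` vanish by orthogonality.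
-/

open LinearMap Submodule Module Module.End Complex

section Field

variable {K M : Type*} [Field K] [AddCommGroup M] [Module K M]

theorem Module.End.isCompl_eigenspace_neg_of_apply_apply_eq_neg {J : End K M}
    (hJ : ∀ v, J (J v) = -v) {i : K} (hi : i * i = -1) (h2 : (2 : K) ≠ 0) :
    IsCompl (J.eigenspace i) (J.eigenspace (-i)) := by
  have hi0 : i ≠ 0 := by rintro rfl; simp at hi
  refine ⟨J.disjoint_genEigenspace (fun h => h2 (mul_right_cancel₀ hi0 ?_)) 1 1, ?_⟩
  · linear_combination h
  rw [codisjoint_iff_exists_add_eq]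
  intro v
  refine ⟨(2 : K)⁻¹ • (v - i • J v), (2 : K)⁻¹ • (v + i • J v), ?_, ?_, ?_⟩
  · rw [mem_eigenspace_iff, map_smul, map_sub, map_smul, hJ]
    linear_combination (norm := module) (2 : K)⁻¹ • hi • J v
  · rw [mem_eigenspace_iff, map_smul, map_add, map_smul, hJ]
    linear_combination (norm := module) (2 : K)⁻¹ • hi • J v
  · match_scalars <;> field_simp <;> ring

def Submodule.graphIn {A B : Submodule K M} (f : A →ₗ[K] B) : Submodule K M :=
  range (A.subtype + B.subtype ∘ₗ f)

theorem Submodule.finrank_graphIn {A B : Submodule K M} (hAB : Disjoint A B) (f : A →ₗ[K] B) :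
    finrank K (graphIn f) = finrank K A := by
  refine finrank_range_of_inj <| (injective_iff_map_eq_zero _).2 fun x hx => ?_
  have hxB : (x : M) ∈ B := by
    rw [eq_neg_of_add_eq_zero_left (show (x : M) + f x = 0 from hx)]
    exact B.neg_mem (f x).2
  exact Subtype.ext (disjoint_def.1 hAB x x.2 hxB)

end Field

section InnerProduct

variable {𝕜 E : Type*} [RCLike 𝕜] [NormedAddCommGroup E] [InnerProductSpace 𝕜 E]

theorem Submodule.disjoint_eigenspace_of_map_le_orthogonal {J : End 𝕜 E} {L : Submodule 𝕜 E}
    (hL : L.map J ≤ Lᗮ) {c : 𝕜} (hc : c ≠ 0) : Disjoint L (J.eigenspace c) := by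
  rw [Submodule.disjoint_def]
  intro x hxL hx
  rw [mem_eigenspace_iff] at hx
  have h : inner 𝕜 x (J x) = 0 := inner_right_of_mem_orthogonal hxL (hL (mem_map_of_mem hxL))
  rw [hx, inner_smul_right, mul_eq_zero, inner_self_eq_zero] at h
  exact h.resolve_left hc

theorem Submodule.orthogonal_eq_map_iff [FiniteDimensional 𝕜 E] {J : E →ₗ[𝕜] E}
    (hJ : Function.Injective J) (L : Submodule 𝕜 E) :
    Lᗮ = L.map J ↔ L.map J ≤ Lᗮ ∧ 2 * finrank 𝕜 L = finrank 𝕜 E := by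
  have hmap : finrank 𝕜 (L.map J) = finrank 𝕜 L :=
    (L.equivMapOfInjective J hJ).finrank_eq.symm
  have hsum := L.finrank_add_finrank_orthogonal
  constructor
  · intro h
    refine ⟨h.ge, ?_⟩
    rw [h, hmap] at hsum
    omega
  · rintro ⟨hle, hdim⟩
    exact (eq_of_le_of_finrank_eq hle (by omega)).symm

theorem Submodule.map_graphIn_le_orthogonal {J : End 𝕜 E} {c : 𝕜}
    (hperp : J.eigenspace c ⟂ J.eigenspace (-c))
    (f : J.eigenspace c →ₗᵢ[𝕜] J.eigenspace (-c)) :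
    (graphIn f.toLinearMap).map J ≤ (graphIn f.toLinearMap)ᗮ := by
  rintro _ ⟨_, ⟨y, rfl⟩, rfl⟩
  rw [mem_orthogonal]
  rintro _ ⟨x, rfl⟩
  have hy : J y = c • (y : E) := mem_eigenspace_iff.1 y.2
  have hfy : J (f y) = (-c) • (f y : E) := mem_eigenspace_iff.1 (f y).2
  have hxfy : inner 𝕜 (x : E) (f y : E) = 0 := hperp.inner_eq x.2 (f y).2
  have hfxy : inner 𝕜 (f x : E) (y : E) = 0 := hperp.symm.inner_eq (f x).2 y.2
  have hff : inner 𝕜 (f x : E) (f y : E) = inner 𝕜 (x : E) y := f.inner_map_map x y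
  simp only [LinearMap.add_apply, coe_comp, Function.comp_apply, subtype_apply,
    LinearIsometry.coe_toLinearMap, map_add, hy, hfy, inner_add_left, inner_add_right,
    inner_smul_right, hxfy, hfxy, hff]
  ring

end InnerProduct

section Complex

variable {E : Type*} [NormedAddCommGroup E] [InnerProductSpace ℂ E]

theorem Module.End.eigenspace_I_isOrtho_eigenspace_neg_I [FiniteDimensional ℂ E]
    {J : End ℂ E} (hJ : adjoint J = -J) : eigenspace J I ⟂ eigenspace J (-I) := by
  rw [isOrtho_iff_inner_eq]
  intro x hx y hy
  rw [mem_eigenspace_iff] at hx hy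
  have h := adjoint_inner_left J y x
  rw [hJ, LinearMap.neg_apply, hx, hy, inner_neg_left, inner_smul_left, inner_smul_right,
    conj_I] at h
  have h2I : (2 * I) * inner ℂ x y = 0 := by linear_combination h
  simpa [I_ne_zero] using h2I

end Complex

/-- Let `V` be a finite-dimensional complex inner product space and `J : V → V`
unitary with `J* = −J`. Then a Lagrangian subspace (`Lᗮ = J(L)`) exists iff
`dim ker(J − i·I) = dim ker(J + i·I)`. -/
theorem stmt17 {V : Type*} [NormedAddCommGroup V] [InnerProductSpace ℂ V]
    [FiniteDimensional ℂ V]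
    (J : V →ₗ[ℂ] V)
    (hJunitary : (LinearMap.adjoint J) ∘ₗ J = LinearMap.id ∧
      J ∘ₗ (LinearMap.adjoint J) = LinearMap.id)
    (hJskew : LinearMap.adjoint J = -J) :
    (∃ L : Submodule ℂ V, Lᗮ = L.map J) ↔
      Module.finrank ℂ ↥(LinearMap.ker (J - Complex.I • (LinearMap.id : V →ₗ[ℂ] V)))
        = Module.finrank ℂ ↥(LinearMap.ker (J + Complex.I • (LinearMap.id : V →ₗ[ℂ] V))) := by
  have hJJ : ∀ v, J (J v) = -v := fun v => by
    simpa [hJskew, neg_eq_iff_eq_neg] using congr($(hJunitary.1) v)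
  have hJinj : Function.Injective J := fun a b h => by simpa [hJJ] using congr(J $h)
  have hker_sub : ker (J - I • LinearMap.id) = eigenspace J I := by rw [eigenspace_def, one_eq_id]
  have hker_add : ker (J + I • LinearMap.id) = eigenspace J (-I) := by
    rw [eigenspace_def, one_eq_id, neg_smul, sub_neg_eq_add]
  have hcompl := isCompl_eigenspace_neg_of_apply_apply_eq_neg hJJ I_mul_I two_ne_zero
  have hsum := finrank_add_eq_of_isCompl hcompl
  rw [exists_congr fun L => orthogonal_eq_map_iff hJinj L, hker_sub, hker_add]
  constructor
  · rintro ⟨L, hLJ, hLdim⟩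
    have hL_neg := finrank_add_finrank_le_of_disjoint
      (disjoint_eigenspace_of_map_le_orthogonal hLJ (neg_ne_zero.2 I_ne_zero))
    have hL_pos := finrank_add_finrank_le_of_disjoint
      (disjoint_eigenspace_of_map_le_orthogonal hLJ I_ne_zero)
    omega
  · intro hdim
    let f := (stdOrthonormalBasis ℂ (eigenspace J I)).equiv
      (stdOrthonormalBasis ℂ (eigenspace J (-I))) (finCongr hdim)
    refine ⟨graphIn f.toLinearIsometry.toLinearMap,
      map_graphIn_le_orthogonal (eigenspace_I_isOrtho_eigenspace_neg_I hJskew) _, ?_⟩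
    rw [finrank_graphIn hcompl.disjoint]
    omega
end
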